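/- For α, β ≥ 0 with α² + β² = 1, the quantity τ = [a + b + 4]/(8 - 3 log₂ 3) - (-2α² log₂ α² - 2β² log₂ β²)/(8 - 3 log₂ 3) - 2/(8 - 3 log₂ 3), where a = -α² log₂ α² - (2-α²) log₂(2-α²) and b = -β² log₂ β² - (2-β²) log₂(2-β²), satisfies τ ≤ 0, with equality if and only if α β = 0. -/

import Mathlib

open Real

noncomputable def tauEt (α β : ℝ) : ℝ :=
  ((-α ^ 2 * logb 2 (α ^ 2) - (2 - α ^ 2) * logb 2 (2 - α ^ 2)) +
      (-β ^ 2 * logb 2 (β ^ 2) - (2 - β ^ 2) * logb 2 (2 - β ^ 2)) + 4) /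
      (8 - 3 * logb 2 3)
    - (-2 * α ^ 2 * logb 2 (α ^ 2) - 2 * β ^ 2 * logb 2 (β ^ 2)) /
      (8 - 3 * logb 2 3)
    - 2 / (8 - 3 * logb 2 3)

/-!
Put `p = α²`, `q = β²`, so that `2 - α² = 1 + q` and `2 - β² = 1 + p`. The numerator of `tauEt`
then splits as
`p log₂ (2p / (1 + p)) + q log₂ (2q / (1 + q)) + (1 - log₂ ((1 + p) (1 + q)))`.
The first two terms are `≤ 0` because `2p ≤ 1 + p` for `p ≤ 1`, and the last one is `< 0` as soon
as `pq > 0`, since `(1 + p) (1 + q) = 2 + pq`. At `pq = 0` the numerator vanishes.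
-/

noncomputable def tauEtNumerator (p q : ℝ) : ℝ :=
  p * logb 2 p + q * logb 2 q - (1 + p) * logb 2 (1 + p) - (1 + q) * logb 2 (1 + q) + 2

theorem tauEt_eq_tauEtNumerator_div {α β : ℝ} (h : α ^ 2 + β ^ 2 = 1) :
    tauEt α β = tauEtNumerator (α ^ 2) (β ^ 2) / (8 - 3 * logb 2 3) := by
  rw [tauEt, tauEtNumerator, show 2 - α ^ 2 = 1 + β ^ 2 by linarith,
    show 2 - β ^ 2 = 1 + α ^ 2 by linarith]
  ring

theorem logb_two_three_lt_two : logb 2 3 < 2 := by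
  rw [logb_lt_iff_lt_rpow one_lt_two three_pos]
  norm_num

theorem mul_logb_two_add_self_le {p : ℝ} (hp₀ : 0 ≤ p) (hp₁ : p ≤ 1) :
    p * (logb 2 p + 1) ≤ p * logb 2 (1 + p) := by
  rcases hp₀.eq_or_lt with rfl | hp
  · simp
  refine mul_le_mul_of_nonneg_left ?_ hp₀
  calc logb 2 p + 1 = logb 2 (2 * p) := by
        rw [logb_mul two_ne_zero hp.ne', logb_self_eq_one one_lt_two, add_comm]
    _ ≤ logb 2 (1 + p) := logb_le_logb_of_le one_lt_two (by positivity) (by linarith)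

theorem one_lt_logb_two_one_add_add_logb_two_one_add {p q : ℝ} (hp : 0 < p) (hq : 0 < q)
    (hpq : p + q = 1) : 1 < logb 2 (1 + p) + logb 2 (1 + q) := by
  rw [← logb_mul (by positivity) (by positivity), lt_logb_iff_rpow_lt one_lt_two (by positivity)]
  nlinarith [mul_pos hp hq]

theorem tauEtNumerator_neg {p q : ℝ} (hp : 0 < p) (hq : 0 < q) (hpq : p + q = 1) :
    tauEtNumerator p q < 0 := by
  have hpq' := one_lt_logb_two_one_add_add_logb_two_one_add hp hq hpq
  have hp' := mul_logb_two_add_self_le hp.le (by linarith)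
  have hq' := mul_logb_two_add_self_le hq.le (by linarith)
  rw [tauEtNumerator]
  linarith

theorem tauEtNumerator_zero_one : tauEtNumerator 0 1 = 0 := by
  norm_num [tauEtNumerator]

theorem tauEtNumerator_comm (p q : ℝ) : tauEtNumerator p q = tauEtNumerator q p := by
  rw [tauEtNumerator, tauEtNumerator]
  ring

theorem tauEtNumerator_nonpos_and_eq_zero_iff {p q : ℝ} (hp : 0 ≤ p) (hq : 0 ≤ q)
    (hpq : p + q = 1) : tauEtNumerator p q ≤ 0 ∧ (tauEtNumerator p q = 0 ↔ p * q = 0) := by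
  rcases hp.eq_or_lt with rfl | hp
  · simp [show q = 1 by linarith, tauEtNumerator_zero_one]
  rcases hq.eq_or_lt with rfl | hq
  · simp [show p = 1 by linarith, tauEtNumerator_comm, tauEtNumerator_zero_one]
  have hneg := tauEtNumerator_neg hp hq hpq
  exact ⟨hneg.le, iff_of_false hneg.ne (mul_pos hp hq).ne'⟩

theorem tauEt_nonpos_general (α β : ℝ)
    (h : α ^ 2 + β ^ 2 = 1) :
    tauEt α β ≤ 0 ∧ (tauEt α β = 0 ↔ α * β = 0) := by
  have hD : 0 < 8 - 3 * logb 2 3 := by linarith [logb_two_three_lt_two]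
  obtain ⟨hle, heq⟩ :=
    tauEtNumerator_nonpos_and_eq_zero_iff (sq_nonneg α) (sq_nonneg β) h
  rw [tauEt_eq_tauEtNumerator_div h, div_eq_zero_iff, heq, ← mul_pow, pow_eq_zero_iff two_ne_zero]
  exact ⟨div_nonpos_of_nonpos_of_nonneg hle hD.le, by simp [hD.ne']⟩

theorem tauEt_nonpos (α β : ℝ) (hα : 0 ≤ α) (hβ : 0 ≤ β)
    (h : α ^ 2 + β ^ 2 = 1) :
    tauEt α β ≤ 0 ∧ (tauEt α β = 0 ↔ α * β = 0) :=
  tauEt_nonpos_general α β h
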